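/- The endomorphism ring of any module of finite length over any ring is strongly clean: every endomorphism of a finite length module decomposes as the sum of an idempotent and an automorphism that commute with each other. -/

import Mathlib

/-!
Fitting's lemma: for `n` large, `M = ker fⁿ ⊕ range fⁿ`, both summands are `f`-stable, `f` is
nilpotent on the first and bijective on the second. Take `e` the projection onto `ker fⁿ` along
`range fⁿ`; it commutes with `f`, and `f - e` is `f - 1` on `ker fⁿ` and `f` on `range fⁿ`. Over an
Artinian module it suffices to check that `f - e` is injective.
-/

def IsStronglyClean (S : Type*) [Ring S] : Prop :=
  ∀ s : S, ∃ e u : S, IsIdempotentElem e ∧ IsUnit u ∧ s = e + u ∧ Commute e u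

namespace Module.End

open LinearMap Submodule

variable {R M : Type*} [Ring R] [AddCommGroup M] [Module R M]

lemma ker_mem_invtSubmodule_of_commute {f g : End R M} (h : Commute f g) :
    ker g ∈ f.invtSubmodule := fun x (hx : g x = 0) ↦ by
  change g (f x) = 0
  rw [← mul_apply, ← h.eq, mul_apply, hx, map_zero]

lemma range_mem_invtSubmodule_of_commute {f g : End R M} (h : Commute f g) :
    range g ∈ f.invtSubmodule := by
  rintro _ ⟨y, rfl⟩
  exact ⟨f y, by rw [← mul_apply, ← h.eq, mul_apply]⟩

lemma commute_projection_ker_range {f g : End R M} (h : Commute f g)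
    (hg : IsCompl (ker g) (range g)) : Commute ((ker g).projection (range g) hg) f :=
  (isIdempotentElem_projection hg).commute_iff.mpr
    ⟨by simpa using ker_mem_invtSubmodule_of_commute h,
      by simpa using range_mem_invtSubmodule_of_commute h⟩

/-- If `f x = e x`, then `e x` is a fixed point of `f` lying in `ker fⁿ`, so `e x = 0`; then
`x ∈ ker f ⊆ ker fⁿ = range e` gives `x = e x = 0`. -/
lemma injective_sub_of_range_eq_ker_pow {e f : End R M} (he : IsIdempotentElem e)
    (hef : Commute e f) {n : ℕ} (hn : n ≠ 0) (hrange : range e = ker (f ^ n)) :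
    Function.Injective (f - e) := by
  rw [← ker_eq_bot, Submodule.eq_bot_iff]
  intro x hx
  have hfx : f x = e x := sub_eq_zero.mp hx
  have hfix : f (e x) = e x := by
    rw [← mul_apply, ← hef.eq, mul_apply, hfx, ← mul_apply, he.eq]
  have hex : e x = 0 := by
    have : e x ∈ ker (f ^ n) := hrange ▸ mem_range_self e x
    rwa [mem_ker, pow_apply, Function.iterate_fixed hfix] at this
  obtain ⟨m, rfl⟩ := Nat.exists_eq_succ_of_ne_zero hn
  have hxker : x ∈ range e := by
    rw [hrange, mem_ker, pow_succ, mul_apply, hfx, hex, map_zero]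
  rw [← he.mem_range_iff.mp hxker, hex]

theorem isStronglyClean [IsNoetherian R M] [IsArtinian R M] : IsStronglyClean (End R M) := by
  intro f
  obtain ⟨n, hn⟩ := Filter.eventually_atTop.mp f.eventually_isCompl_ker_pow_range_pow
  -- `n + 1` rather than `n`: for the exponent `0` the decomposition `⊥ ⊕ ⊤` says nothing.
  have hc := hn (n + 1) n.le_succ
  set e := (ker (f ^ (n + 1))).projection (range (f ^ (n + 1))) hc
  have he : IsIdempotentElem e := isIdempotentElem_projection hc
  have hef : Commute e f := commute_projection_ker_range (Commute.self_pow f _) hc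
  have hu : IsUnit (f - e) := (isUnit_iff _).mpr <| IsArtinian.bijective_of_injective_endomorphism
    _ (injective_sub_of_range_eq_ker_pow he hef n.succ_ne_zero (range_projection hc))
  exact ⟨e, f - e, he, hu, (add_sub_cancel e f).symm, hef.sub_right (Commute.refl e)⟩

end Module.End

/-- The endomorphism ring of a module of finite length over any ring is strongly
clean: every endomorphism is the sum of an idempotent and a unit that commute. -/
theorem stmt13 (R M : Type*) [Ring R] [AddCommGroup M] [Module R M]
    (hM : IsFiniteLength R M) (f : Module.End R M) :
    ∃ e u : Module.End R M, IsIdempotentElem e ∧ IsUnit u ∧ f = e + u ∧ e * u = u * e := by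
  obtain ⟨_, _⟩ := isFiniteLength_iff_isNoetherian_isArtinian.mp hM
  exact Module.End.isStronglyClean f
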